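/- arXiv:2011.05070 — 2 statements merged into one kernel-verified Lean document; each statement's English description precedes it below -/
import Mathlib

section
/- Let N ≥ 1 and I ≥ 1 be integers, β > 0, μ > 0, u > 0. Let W be a random variable with the Gamma distribution of shape N and rate β, and let X be a random variable with the Gamma distribution of shape I and rate μ, independent of W. Then P( W < u (X + 1) ) = (μ^I e^{μ}/(I-1)!) Σ_{g=0}^{I-1} C(I-1, g) (-1)^{I-1-g} [ μ^{-(g+1)} Γ(g+1, μ) - Σ_{i=0}^{N-1} ((u β)^i / i!) (μ + u β)^{-(g+i+1)} Γ(g+i+1, μ + u β) ]. (This is the first-hop outage term, Eq. (9) of Theorem 1, with β = λ_{s,k}/B.) -/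
/-! Conditioning on `X`, the probability is `E[F(u (X + 1))]` where, for integer shape, the
Gamma cdf is `F t = 1 - e^{-βt} ∑_{i<N} (βt)^i / i!`. After the shift `y = X + 1`, expanding
`(y - 1)^(I-1)` binomially leaves integrals `∫_1^∞ y^k e^{-cy} dy = c^{-(k+1)} Γ(k+1, c)`. -/

open MeasureTheory ProbabilityTheory Real Set

/-- The upper incomplete gamma function `Γ(s, x) = ∫_x^∞ t^(s-1) e^(-t) dt`
(for integer `s ≥ 1`). -/
noncomputable def upperGamma (s : ℕ) (x : ℝ) : ℝ :=
  ∫ t in Set.Ioi x, t ^ (s - 1) * Real.exp (-t)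

open scoped Nat

open Filter Asymptotics in
lemma integrableOn_pow_mul_exp_neg_mul_Ioi (k : ℕ) {c : ℝ} (hc : 0 < c) (a : ℝ) :
    IntegrableOn (fun y : ℝ => y ^ k * exp (-(c * y))) (Ioi a) := by
  refine integrable_of_isBigO_exp_neg (half_pos hc) (by fun_prop) ?_
  have hpow := (isLittleO_pow_exp_pos_mul_atTop k (half_pos hc)).isBigO
  refine (hpow.mul (isBigO_refl (fun y : ℝ => exp (-(c * y))) atTop)).congr_right fun y => ?_
  rw [← exp_add]
  ring_nf

lemma integral_Ioi_comp_add_right {E : Type*} [NormedAddCommGroup E] [NormedSpace ℝ E]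
    (f : ℝ → E) (a b : ℝ) :
    ∫ x in Ioi a, f (x + b) = ∫ y in Ioi (a + b), f y := by
  simpa [preimage_add_const_Ioi] using
    (measurePreserving_add_right volume b).setIntegral_preimage_emb
      (measurableEmbedding_addRight b) f (Ioi (a + b))

lemma integral_pow_mul_exp_neg_mul_Ioi (k : ℕ) {c : ℝ} (hc : 0 < c) (a : ℝ) :
    ∫ y in Ioi a, y ^ k * exp (-(c * y)) = c ^ (-(k + 1 : ℤ)) * upperGamma (k + 1) (c * a) := by
  have hscale : ∀ y,
      y ^ k * exp (-(c * y)) = c ^ (-(k : ℤ)) * ((c * y) ^ k * exp (-(c * y))) := by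
    intro y
    rw [mul_pow, zpow_neg, zpow_natCast]
    field_simp
  simp_rw [hscale]
  rw [integral_const_mul, integral_comp_mul_left_Ioi (fun t => t ^ k * exp (-t)) a hc, upperGamma,
    Nat.add_sub_cancel, smul_eq_mul, ← mul_assoc, ← zpow_neg_one, ← zpow_add₀ hc.ne']
  ring_nf

lemma gammaPDFReal_natCast_succ (n : ℕ) (r : ℝ) {x : ℝ} (hx : 0 ≤ x) :
    gammaPDFReal ((n + 1 : ℕ) : ℝ) r x = r ^ (n + 1) / n ! * x ^ n * exp (-(r * x)) := by
  rw [gammaPDFReal, if_pos hx, Nat.cast_succ, Real.Gamma_nat_eq_factorial, add_sub_cancel_right,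
    ← Nat.cast_succ, Real.rpow_natCast, Real.rpow_natCast]

lemma hasDerivAt_exp_neg_mul_mul_sum_range (r t : ℝ) (n : ℕ) :
    HasDerivAt (fun t => exp (-(r * t)) * ∑ i ∈ Finset.range (n + 1), (r * t) ^ i / i !)
      (-(r ^ (n + 1) / n ! * t ^ n * exp (-(r * t)))) t := by
  have hexp : HasDerivAt (fun t => exp (-(r * t))) (exp (-(r * t)) * -(r * 1)) t :=
    ((hasDerivAt_id t).const_mul r).neg.exp
  induction n with
  | zero => simpa [mul_comm] using hexp
  | succ n ih =>
    have hterm : HasDerivAt (fun t => (r * t) ^ (n + 1) / (n + 1)!)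
        ((n + 1 : ℕ) * (r * t) ^ n * (r * 1) / (n + 1)!) t :=
      (((hasDerivAt_id t).const_mul r).pow (n + 1)).div_const _
    simp_rw [Finset.sum_range_succ _ (n + 1), mul_add]
    refine (ih.add (hexp.mul hterm)).congr_deriv ?_
    rw [Nat.factorial_succ]
    push_cast
    field_simp
    ring

lemma integral_gammaMeasure {E : Type*} [NormedAddCommGroup E] [NormedSpace ℝ E]
    {a r : ℝ} (ha : 0 < a) (hr : 0 < r) (f : ℝ → E) :
    ∫ x, f x ∂gammaMeasure a r = ∫ x in Ioi 0, gammaPDFReal a r x • f x := by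
  rw [gammaMeasure, integral_withDensity_eq_integral_toReal_smul (f := gammaPDF a r)
      (measurable_gammaPDFReal a r).ennreal_ofReal (ae_of_all _ fun _ => ENNReal.ofReal_lt_top),
    ← integral_Ici_eq_integral_Ioi, setIntegral_eq_integral_of_forall_compl_eq_zero]
  · simp only [gammaPDF, ENNReal.toReal_ofReal (gammaPDFReal_nonneg ha hr _)]
  · intro x hx
    simp [gammaPDFReal, show ¬0 ≤ x from hx]

lemma measureReal_gammaMeasure_Iio (n : ℕ) {r t : ℝ} (hr : 0 < r) (ht : 0 ≤ t) :
    (gammaMeasure ((n + 1 : ℕ) : ℝ) r).real (Iio t)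
      = 1 - exp (-(r * t)) * ∑ i ∈ Finset.range (n + 1), (r * t) ^ i / i ! := by
  have hn : (0 : ℝ) < (n + 1 : ℕ) := by positivity
  have hderiv : ∀ x ∈ uIcc 0 t, HasDerivAt
      (fun t => -(exp (-(r * t)) * ∑ i ∈ Finset.range (n + 1), (r * t) ^ i / i !))
      (gammaPDFReal ((n + 1 : ℕ) : ℝ) r x) x := by
    intro x hx
    rw [uIcc_of_le ht] at hx
    rw [gammaPDFReal_natCast_succ n r hx.1, ← neg_neg (_ * _ * _)]
    exact (hasDerivAt_exp_neg_mul_mul_sum_range r x n).neg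
  have hintegrable : IntervalIntegrable (gammaPDFReal ((n + 1 : ℕ) : ℝ) r) volume 0 t := by
    have hcont : Continuous fun x : ℝ => r ^ (n + 1) / n ! * x ^ n * exp (-(r * x)) := by
      fun_prop
    refine ContinuousOn.intervalIntegrable (hcont.continuousOn.congr fun x hx => ?_)
    exact gammaPDFReal_natCast_succ n r (by rw [uIcc_of_le ht] at hx; exact hx.1)
  rw [← integral_indicator_one measurableSet_Iio, integral_gammaMeasure hn hr]
  simp_rw [smul_eq_mul, ← indicator_mul_right, Pi.one_apply, mul_one]
  rw [setIntegral_indicator measurableSet_Iio, Ioi_inter_Iio, ← integral_Ioc_eq_integral_Ioo,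
    ← intervalIntegral.integral_of_le ht,
    intervalIntegral.integral_eq_sub_of_hasDerivAt hderiv hintegrable]
  simp [Finset.sum_range_succ']
  ring

lemma measureReal_lt_comp_eq_integral {Ω E : Type*} [MeasurableSpace Ω] [MeasurableSpace E]
    {P : Measure Ω} [IsFiniteMeasure P] {W : Ω → ℝ} {X : Ω → E}
    (hW : Measurable W) (hX : Measurable X) (hindep : IndepFun W X P) {h : E → ℝ}
    (hh : Measurable h) :
    P.real {ω | W ω < h (X ω)} = ∫ x, (P.map W).real (Iio (h x)) ∂(P.map X) := by
  have hs : MeasurableSet {p : E × ℝ | p.2 < h p.1} :=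
    measurableSet_lt measurable_snd (hh.comp measurable_fst)
  have hjoint : P.map (fun ω => (X ω, W ω)) = (P.map X).prod (P.map W) :=
    (indepFun_iff_map_prod_eq_prod_map_map hX.aemeasurable hW.aemeasurable).mp hindep.symm
  calc P.real {ω | W ω < h (X ω)}
      = (P.map fun ω => (X ω, W ω)).real {p | p.2 < h p.1} :=
        (map_measureReal_apply (hX.prodMk hW) hs).symm
    _ = ((P.map X).prod (P.map W)).real {p | p.2 < h p.1} := by rw [hjoint]
    _ = ∫ x, (P.map W).real (Iio (h x)) ∂(P.map X) := by
        rw [measureReal_def, Measure.prod_apply hs, ← integral_toReal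
          (measurable_measure_prodMk_left hs).aemeasurable
          (ae_of_all _ fun _ => measure_lt_top _ _)]
        rfl

lemma pow_eq_sum_choose_mul_neg_one_pow_mul_add_one_pow {R : Type*} [CommRing R] (x : R) (m : ℕ) :
    x ^ m = ∑ g ∈ Finset.range (m + 1), (m.choose g : R) * (-1) ^ (m - g) * (x + 1) ^ g := by
  conv_lhs => rw [show x = (x + 1) + -1 by ring, add_pow]
  exact Finset.sum_congr rfl fun g _ => by ring

lemma integral_Ioi_sum_mul_pow_mul_exp_sub (s : Finset ℕ) (w : ℕ → ℝ) (N : ℕ) {μ b : ℝ}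
    (hμ : 0 < μ) (hμb : 0 < μ + b) (a : ℝ) :
    ∫ y in Ioi a, ∑ g ∈ s, w g * (y ^ g * exp (-(μ * y)) -
        ∑ i ∈ Finset.range N, b ^ i / i ! * (y ^ (g + i) * exp (-((μ + b) * y))))
      = ∑ g ∈ s, w g * (μ ^ (-(g + 1 : ℤ)) * upperGamma (g + 1) (μ * a) -
        ∑ i ∈ Finset.range N, b ^ i / i ! * (μ + b) ^ (-(g + i + 1 : ℤ)) *
          upperGamma (g + i + 1) ((μ + b) * a)) := by
  have hterm : ∀ {c : ℝ} k, 0 < c →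
      IntegrableOn (fun y : ℝ => y ^ k * exp (-(c * y))) (Ioi a) :=
    fun k hc => integrableOn_pow_mul_exp_neg_mul_Ioi k hc a
  have hsum : ∀ g, IntegrableOn (fun y : ℝ => ∑ i ∈ Finset.range N,
      b ^ i / i ! * (y ^ (g + i) * exp (-((μ + b) * y)))) (Ioi a) :=
    fun g => integrable_finsetSum _ fun i _ => (hterm (g + i) hμb).const_mul _
  rw [integral_finsetSum]
  swap
  · exact fun g _ => ((hterm g hμ).sub (hsum g)).const_mul _
  refine Finset.sum_congr rfl fun g _ => ?_
  rw [integral_const_mul, integral_sub (hterm g hμ) (hsum g),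
    integral_pow_mul_exp_neg_mul_Ioi g hμ,
    integral_finsetSum _ fun i _ => (hterm (g + i) hμb).const_mul _]
  congr 2
  refine Finset.sum_congr rfl fun i _ => ?_
  rw [integral_const_mul, integral_pow_mul_exp_neg_mul_Ioi _ hμb, mul_assoc]
  push_cast
  ring_nf

lemma pow_mul_exp_mul_one_sub_eq_sum_choose (m N : ℕ) (μ b x : ℝ) :
    μ ^ (m + 1) / m ! * x ^ m * exp (-(μ * x)) *
        (1 - exp (-(b * (x + 1))) * ∑ i ∈ Finset.range N, (b * (x + 1)) ^ i / i !)
      = μ ^ (m + 1) * exp μ / m ! * ∑ g ∈ Finset.range (m + 1),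
          (m.choose g : ℝ) * (-1) ^ (m - g) * ((x + 1) ^ g * exp (-(μ * (x + 1))) -
            ∑ i ∈ Finset.range N, b ^ i / i ! *
              ((x + 1) ^ (g + i) * exp (-((μ + b) * (x + 1))))) := by
  have hexp : exp (-(μ * x)) = exp μ * exp (-(μ * (x + 1))) := by rw [← exp_add]; ring_nf
  have hsum : ∀ g, ∑ i ∈ Finset.range N, b ^ i / i ! *
      ((x + 1) ^ (g + i) * exp (-((μ + b) * (x + 1)))) = (x + 1) ^ g * exp (-(μ * (x + 1))) *
        (exp (-(b * (x + 1))) * ∑ i ∈ Finset.range N, (b * (x + 1)) ^ i / i !) := by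
    intro g
    rw [Finset.mul_sum, Finset.mul_sum]
    refine Finset.sum_congr rfl fun i _ => ?_
    rw [mul_pow, pow_add, add_mul, neg_add, exp_add]
    ring
  simp_rw [hsum]
  generalize exp (-(b * (x + 1))) * ∑ i ∈ Finset.range N, (b * (x + 1)) ^ i / i ! = S
  rw [pow_eq_sum_choose_mul_neg_one_pow_mul_add_one_pow x m, hexp]
  simp only [Finset.mul_sum, Finset.sum_mul]
  refine Finset.sum_congr rfl fun g _ => ?_
  ring

/-- Let `W` be Gamma-distributed with shape `N ≥ 1` and rate `β > 0`, and `X` be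
Gamma-distributed with shape `I ≥ 1` and rate `μ > 0`, independent of `W`.
Then `P(W < u (X + 1))` equals the expression of Eq. (9) of Theorem 1. -/
theorem first_hop_outage
    {Ω : Type*} [MeasurableSpace Ω] (P : Measure Ω) [IsProbabilityMeasure P]
    (N : ℕ) (hN : 1 ≤ N) (I : ℕ) (hI : 1 ≤ I)
    (β μ u : ℝ) (hβ : 0 < β) (hμ : 0 < μ) (hu : 0 < u)
    (W X : Ω → ℝ) (hWmeas : Measurable W) (hXmeas : Measurable X)
    (hWdist : Measure.map W P = gammaMeasure N β)
    (hXdist : Measure.map X P = gammaMeasure I μ)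
    (hindep : IndepFun W X P) :
    (P {ω | W ω < u * (X ω + 1)}).toReal =
      μ ^ I * Real.exp μ / (Nat.factorial (I - 1) : ℝ) *
        ∑ g ∈ Finset.range I, ((I - 1).choose g : ℝ) * (-1 : ℝ) ^ (I - 1 - g) *
          (μ ^ (-(g + 1 : ℤ)) * upperGamma (g + 1) μ -
            ∑ i ∈ Finset.range N, (u * β) ^ i / (Nat.factorial i : ℝ) *
              (μ + u * β) ^ (-(g + i + 1 : ℤ)) * upperGamma (g + i + 1) (μ + u * β)) := by
  obtain ⟨n, rfl⟩ : ∃ n, N = n + 1 := ⟨N - 1, by omega⟩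
  obtain ⟨m, rfl⟩ : ∃ m, I = m + 1 := ⟨I - 1, by omega⟩
  set G : ℝ → ℝ := fun y =>
    ∑ g ∈ Finset.range (m + 1), (m.choose g : ℝ) * (-1) ^ (m - g) * (y ^ g * exp (-(μ * y)) -
      ∑ i ∈ Finset.range (n + 1), (u * β) ^ i / i ! *
        (y ^ (g + i) * exp (-((μ + u * β) * y))))
  have hexpand : ∀ x ∈ Ioi (0 : ℝ), gammaPDFReal ((m + 1 : ℕ) : ℝ) μ x •
      (gammaMeasure ((n + 1 : ℕ) : ℝ) β).real (Iio (u * (x + 1)))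
        = μ ^ (m + 1) * exp μ / m ! * G (x + 1) := fun x hx => by
    rw [smul_eq_mul, gammaPDFReal_natCast_succ m μ (le_of_lt hx),
      measureReal_gammaMeasure_Iio n hβ (mul_pos hu (by linarith [mem_Ioi.mp hx])).le,
      show β * (u * (x + 1)) = u * β * (x + 1) by ring]
    exact pow_mul_exp_mul_one_sub_eq_sum_choose m (n + 1) μ (u * β) x
  rw [← measureReal_def, measureReal_lt_comp_eq_integral (h := fun x => u * (x + 1)) hWmeas
      hXmeas hindep (by fun_prop), hWdist, hXdist, integral_gammaMeasure (by positivity) hμ,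
    setIntegral_congr_fun measurableSet_Ioi hexpand, integral_const_mul,
    integral_Ioi_comp_add_right G, zero_add,
    integral_Ioi_sum_mul_pow_mul_exp_sub _ _ _ hμ (by positivity)]
  simp only [mul_one, Nat.add_sub_cancel]
end

section
/- Let N ≥ 1 and I ≥ 1 be integers, B > 0, μ > 0, u > 0, and let X be a random variable with the Gamma distribution of shape I and rate μ. For each λ > 0 let W^{(λ)} be a random variable with the Gamma distribution of shape N and rate λ/B, independent of X. Then lim_{λ → 0+} λ^{-N} P( W^{(λ)} < u (X + 1) ) = (u^N / (B^N N!)) E[(X+1)^N], and this limit equals (u^N/(B^N N!)) (μ^I e^{μ}/(I-1)!) Σ_{g=0}^{I-1} C(I-1, g) (-1)^{I-1-g} μ^{-(g+N+1)} Γ(g+N+1, μ). (This is the exact high-SNR asymptotic of the first-hop outage term in Theorem 2, Eq. (11).) -/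
/-!
For integer shape `n + 1` and rate `r`,
`P(Gamma(n + 1, r) < t) = r ^ (n + 1) / n! * ∫₀ᵗ yⁿ e^(-ry) dy`, so
`r^(-(n + 1)) P(Gamma(n + 1, r) < t)` is at most `t ^ (n + 1) / (n + 1)!` and tends to it as
`r → 0+`. By independence, `λ^(-N) P(W < u (X + 1))` is `B^(-N)` times the expectation of this
quantity at `t = u (X + 1)`, `r = λ / B`, and dominated convergence gives the limit. The closed
form of `E[(X + 1)^N]` comes from expanding `x^(I-1) = ((x + 1) - 1)^(I-1)` in the Gamma density
and substituting `t = μ (x + 1)` in each term, which produces `Γ(g + N + 1, μ)`.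
-/

open MeasureTheory ProbabilityTheory Real Set Filter Topology

open scoped Nat

section IoiTranslation

variable {E : Type*} [NormedAddCommGroup E]

theorem integrableOn_Ioi_comp_add_right_iff (f : ℝ → E) (a d : ℝ) :
    IntegrableOn (fun x => f (x + d)) (Ioi a) ↔ IntegrableOn f (Ioi (a + d)) := by
  have h := (measurePreserving_add_right volume d).integrableOn_comp_preimage
    (measurableEmbedding_addRight d) (f := f) (s := Ioi (a + d))
  rwa [preimage_add_const_Ioi, add_sub_cancel_right] at h

variable [NormedSpace ℝ E]

theorem integral_comp_add_right_Ioi (f : ℝ → E) (a d : ℝ) :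
    ∫ x in Ioi a, f (x + d) = ∫ x in Ioi (a + d), f x := by
  have h := (measurePreserving_add_right volume d).setIntegral_preimage_emb
    (measurableEmbedding_addRight d) f (Ioi (a + d))
  rwa [preimage_add_const_Ioi, add_sub_cancel_right] at h

end IoiTranslation

theorem integrableOn_pow_mul_exp_neg_Ioi (k : ℕ) {a : ℝ} (ha : 0 ≤ a) :
    IntegrableOn (fun t : ℝ => t ^ k * exp (-t)) (Ioi a) := by
  refine ((GammaIntegral_convergent (s := k + 1) (by positivity)).mono_set
    (Ioi_subset_Ioi ha)).congr_fun (fun t _ => ?_) measurableSet_Ioi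
  simp only [add_sub_cancel_right, rpow_natCast, mul_comm]

theorem add_one_pow_mul_exp_neg_mul (k : ℕ) {μ : ℝ} (hμ : 0 < μ) (x : ℝ) :
    (x + 1) ^ k * exp (-(μ * x))
      = exp μ / μ ^ k * ((μ * (x + 1)) ^ k * exp (-(μ * (x + 1)))) := by
  rw [mul_pow, show -(μ * (x + 1)) = -(μ * x) + -μ by ring, exp_add, exp_neg μ]
  field_simp

theorem integrableOn_add_one_pow_mul_exp_neg_mul (k : ℕ) {μ : ℝ} (hμ : 0 < μ) :
    IntegrableOn (fun x => (x + 1) ^ k * exp (-(μ * x))) (Ioi 0) := by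
  have h : IntegrableOn (fun x => (μ * (x + 1)) ^ k * exp (-(μ * (x + 1)))) (Ioi 0) := by
    rw [integrableOn_Ioi_comp_add_right_iff (fun x => (μ * x) ^ k * exp (-(μ * x))),
      integrableOn_Ioi_comp_mul_left_iff (fun t => t ^ k * exp (-t)) _ hμ]
    exact integrableOn_pow_mul_exp_neg_Ioi k (by positivity)
  have h' : IntegrableOn
      (fun x => exp μ / μ ^ k * ((μ * (x + 1)) ^ k * exp (-(μ * (x + 1))))) (Ioi 0) :=
    h.const_mul _
  simpa only [← add_one_pow_mul_exp_neg_mul k hμ] using h'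

theorem integral_add_one_pow_mul_exp_neg_mul (k : ℕ) {μ : ℝ} (hμ : 0 < μ) :
    ∫ x in Ioi 0, (x + 1) ^ k * exp (-(μ * x))
      = exp μ * μ ^ (-(k + 1 : ℤ)) * upperGamma (k + 1) μ := by
  simp_rw [add_one_pow_mul_exp_neg_mul k hμ]
  rw [integral_const_mul, integral_comp_add_right_Ioi (fun x => (μ * x) ^ k * exp (-(μ * x))),
    integral_comp_mul_left_Ioi (fun t => t ^ k * exp (-t)) _ hμ, zero_add, mul_one, upperGamma,
    add_tsub_cancel_right, smul_eq_mul, zpow_neg, ← Nat.cast_succ, zpow_natCast, pow_succ]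
  field_simp

theorem tendsto_div_const_nhdsGT_zero {B : ℝ} (hB : 0 < B) :
    Tendsto (fun x => x / B) (𝓝[>] 0) (𝓝[>] 0) := by
  refine tendsto_nhdsWithin_iff.mpr
    ⟨?_, eventually_nhdsWithin_of_forall fun x hx => div_pos hx hB⟩
  simpa using ((continuous_id.div_const B).tendsto 0).mono_left nhdsWithin_le_nhds

theorem MeasureTheory.Measure.measurable_measureReal_Iio (μ : Measure ℝ) :
    Measurable fun t => μ.real (Iio t) :=
  ENNReal.measurable_toReal.comp (Monotone.measurable fun _ _ h => measure_mono (Iio_subset_Iio h))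

namespace ProbabilityTheory

theorem IndepFun.measureReal_mem_eq_integral {Ω α β : Type*} [MeasurableSpace Ω]
    [MeasurableSpace α] [MeasurableSpace β] {P : Measure Ω} [IsFiniteMeasure P]
    {X : Ω → α} {Y : Ω → β} (hXY : IndepFun X Y P) (hX : Measurable X) (hY : Measurable Y)
    {s : Set (α × β)} (hs : MeasurableSet s) :
    P.real {ω | (X ω, Y ω) ∈ s} = ∫ x, (P.map Y).real (Prod.mk x ⁻¹' s) ∂P.map X := by
  change P.real ((fun ω => (X ω, Y ω)) ⁻¹' s) = _
  rw [measureReal_def, ← Measure.map_apply (hX.prodMk hY) hs,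
    hXY.map_prod_eq_prod_map_map hX.aemeasurable hY.aemeasurable, Measure.prod_apply hs,
    ← integral_toReal (measurable_measure_prodMk_left hs).aemeasurable
      (ae_of_all _ fun _ => measure_lt_top _ _)]
  rfl

theorem gammaPDFReal_natCast_add_one (n : ℕ) (r : ℝ) {x : ℝ} (hx : 0 ≤ x) :
    gammaPDFReal (n + 1 : ℕ) r x = r ^ (n + 1) / n ! * (x ^ n * exp (-(r * x))) := by
  rw [gammaPDFReal, if_pos hx, Nat.cast_succ, Real.Gamma_nat_eq_factorial, add_sub_cancel_right,
    ← Nat.cast_succ, rpow_natCast, rpow_natCast, mul_assoc]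

theorem gammaPDFReal_of_neg {a r x : ℝ} (hx : x < 0) : gammaPDFReal a r x = 0 :=
  if_neg (not_le.mpr hx)

theorem measurable_gammaPDF (a r : ℝ) : Measurable (gammaPDF a r) :=
  (measurable_gammaPDFReal a r).ennreal_ofReal

theorem toReal_gammaPDF {a r : ℝ} (ha : 0 < a) (hr : 0 < r) (x : ℝ) :
    (gammaPDF a r x).toReal = gammaPDFReal a r x :=
  ENNReal.toReal_ofReal (gammaPDFReal_nonneg ha hr x)

theorem ae_nonneg_gammaMeasure (a r : ℝ) : ∀ᵐ x ∂gammaMeasure a r, 0 ≤ x := by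
  simp_rw [ae_iff, not_le]
  change gammaMeasure a r (Iio 0) = 0
  rw [gammaMeasure, withDensity_apply _ measurableSet_Iio]
  exact lintegral_gammaPDF_of_nonpos le_rfl

theorem integral_gammaMeasure {a r : ℝ} (ha : 0 < a) (hr : 0 < r) (f : ℝ → ℝ) :
    ∫ x, f x ∂gammaMeasure a r = ∫ x in Ioi 0, gammaPDFReal a r x * f x := by
  rw [gammaMeasure, integral_withDensity_eq_integral_toReal_smul (measurable_gammaPDF a r)
    (ae_of_all _ fun _ => ENNReal.ofReal_lt_top), ← integral_Ici_eq_integral_Ioi,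
    ← setIntegral_eq_integral_of_forall_compl_eq_zero (s := Ici 0)]
  · simp_rw [toReal_gammaPDF ha hr, smul_eq_mul]
  · intro x hx
    rw [gammaPDF, gammaPDFReal_of_neg (not_le.mp hx), ENNReal.ofReal_zero, ENNReal.toReal_zero,
      zero_smul]

theorem integrable_gammaMeasure_iff {a r : ℝ} (ha : 0 < a) (hr : 0 < r) {f : ℝ → ℝ} :
    Integrable f (gammaMeasure a r) ↔
      IntegrableOn (fun x => gammaPDFReal a r x * f x) (Ioi 0) := by
  rw [gammaMeasure, integrable_withDensity_iff_integrable_smul' (measurable_gammaPDF a r)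
    (ae_of_all _ fun _ => ENNReal.ofReal_lt_top), ← integrableOn_Ici_iff_integrableOn_Ioi,
    ← integrable_indicator_iff measurableSet_Ici]
  simp_rw [toReal_gammaPDF ha hr, smul_eq_mul]
  refine integrable_congr (ae_of_all _ fun x => ?_)
  by_cases hx : 0 ≤ x
  · rw [indicator_of_mem (mem_Ici.mpr hx)]
  · rw [indicator_of_notMem (by simpa using hx)]
    simp [gammaPDFReal_of_neg (not_le.mp hx)]

theorem measureReal_gammaMeasure_Iio (n : ℕ) {r t : ℝ} (hr : 0 < r) (ht : 0 ≤ t) :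
    (gammaMeasure (n + 1 : ℕ) r).real (Iio t)
      = r ^ (n + 1) / n ! * ∫ y in 0..t, y ^ n * exp (-(r * y)) := by
  have hn : (0 : ℝ) < (n + 1 : ℕ) := by positivity
  have : IsProbabilityMeasure (gammaMeasure (n + 1 : ℕ) r) :=
    isProbabilityMeasure_gammaMeasure hn hr
  have hac : gammaMeasure (n + 1 : ℕ) r ≪ volume := withDensity_absolutelyContinuous _ _
  rw [measureReal_def, measure_congr (hac.ae_le Iio_ae_eq_Iic), ← measureReal_def,
    ← cdf_eq_real, cdf_gammaMeasure_eq_integral hn hr,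
    setIntegral_eq_of_subset_of_forall_sdiff_eq_zero measurableSet_Iic Icc_subset_Iic_self,
    integral_Icc_eq_integral_Ioc,
    ← intervalIntegral.integral_of_le ht, ← intervalIntegral.integral_const_mul]
  · refine intervalIntegral.integral_congr fun y hy => ?_
    rw [uIcc_of_le ht] at hy
    exact gammaPDFReal_natCast_add_one n r hy.1
  · exact fun y hy => gammaPDFReal_of_neg (not_le.mp fun hy0 => hy.2 ⟨hy0, hy.1⟩)

theorem measureReal_gammaMeasure_Iio_div_pow (n : ℕ) {r t : ℝ} (hr : 0 < r) (ht : 0 ≤ t) :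
    (gammaMeasure (n + 1 : ℕ) r).real (Iio t) / r ^ (n + 1)
      = (∫ y in 0..t, y ^ n * exp (-(r * y))) / n ! := by
  rw [measureReal_gammaMeasure_Iio n hr ht]
  field_simp

theorem integral_pow_div_factorial (n : ℕ) (t : ℝ) :
    (∫ y in 0..t, y ^ n) / n ! = t ^ (n + 1) / (n + 1)! := by
  rw [integral_pow, Nat.factorial_succ]
  push_cast
  field_simp
  ring

theorem measureReal_gammaMeasure_Iio_div_pow_le (n : ℕ) {r t : ℝ} (hr : 0 < r) (ht : 0 ≤ t) :
    (gammaMeasure (n + 1 : ℕ) r).real (Iio t) / r ^ (n + 1) ≤ t ^ (n + 1) / (n + 1)! := by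
  rw [measureReal_gammaMeasure_Iio_div_pow n hr ht, ← integral_pow_div_factorial]
  gcongr
  refine intervalIntegral.integral_mono_on ht (Continuous.intervalIntegrable (by fun_prop) _ _)
    (Continuous.intervalIntegrable (by fun_prop) _ _) fun y hy => ?_
  have hy0 : 0 ≤ y := hy.1
  exact mul_le_of_le_one_right (by positivity) (exp_le_one_iff.mpr (by nlinarith))

theorem tendsto_measureReal_gammaMeasure_Iio_div_pow (n : ℕ) {t : ℝ} (ht : 0 ≤ t) :
    Tendsto (fun r => (gammaMeasure (n + 1 : ℕ) r).real (Iio t) / r ^ (n + 1)) (𝓝[>] 0)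
      (𝓝 (t ^ (n + 1) / (n + 1)!)) := by
  have hcont : Continuous fun r : ℝ => (∫ y in 0..t, y ^ n * exp (-(r * y))) / n ! :=
    (intervalIntegral.continuous_parametric_intervalIntegral_of_continuous' (by fun_prop) 0 t
      ).div_const _
  have h0 := hcont.tendsto 0
  simp only [zero_mul, neg_zero, exp_zero, mul_one, integral_pow_div_factorial] at h0
  refine (h0.mono_left nhdsWithin_le_nhds).congr' ?_
  filter_upwards [self_mem_nhdsWithin] with r hr
  exact (measureReal_gammaMeasure_Iio_div_pow n hr ht).symm

theorem tendsto_integral_measureReal_gammaMeasure_Iio_div_pow (n : ℕ) {ν : Measure ℝ}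
    {g : ℝ → ℝ} (hg : Measurable g) (hg_nonneg : ∀ᵐ x ∂ν, 0 ≤ g x)
    (hg_int : Integrable (fun x => g x ^ (n + 1)) ν) :
    Tendsto (fun r => ∫ x, (gammaMeasure (n + 1 : ℕ) r).real (Iio (g x)) / r ^ (n + 1) ∂ν)
      (𝓝[>] 0) (𝓝 ((∫ x, g x ^ (n + 1) ∂ν) / (n + 1)!)) := by
  rw [← integral_div]
  refine tendsto_integral_filter_of_dominated_convergence (fun x => g x ^ (n + 1) / (n + 1)!)
    (Eventually.of_forall fun r =>
      (((gammaMeasure _ r).measurable_measureReal_Iio.comp hg).div_const _).aestronglyMeasurable)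
    ?_ (hg_int.div_const ((n + 1)! : ℝ)) ?_
  · filter_upwards [self_mem_nhdsWithin] with r (hr : 0 < r)
    filter_upwards [hg_nonneg] with x hx
    rw [norm_of_nonneg (by positivity)]
    exact measureReal_gammaMeasure_Iio_div_pow_le n hr hx
  · filter_upwards [hg_nonneg] with x hx
    exact tendsto_measureReal_gammaMeasure_Iio_div_pow n hx

theorem tendsto_zpow_mul_measureReal_lt_mul_add_one {Ω : Type*} [MeasurableSpace Ω]
    {P : Measure Ω} [IsFiniteMeasure P] (n : ℕ) {B u : ℝ} (hB : 0 < B) (hu : 0 < u)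
    {X : Ω → ℝ} (hX : Measurable X) (hX_nonneg : ∀ᵐ x ∂P.map X, 0 ≤ x)
    (hX_int : Integrable (fun x => (x + 1) ^ (n + 1)) (P.map X)) {W : ℝ → Ω → ℝ}
    (hW : ∀ lam, 0 < lam → Measurable (W lam))
    (hW_law : ∀ lam, 0 < lam → P.map (W lam) = gammaMeasure (n + 1 : ℕ) (lam / B))
    (hindep : ∀ lam, 0 < lam → IndepFun X (W lam) P) :
    Tendsto (fun lam => lam ^ (-((n + 1 : ℕ) : ℤ)) * P.real {ω | W lam ω < u * (X ω + 1)})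
      (𝓝[>] 0)
      (𝓝 (u ^ (n + 1) / (B ^ (n + 1) * (n + 1)!) * ∫ x, (x + 1) ^ (n + 1) ∂P.map X)) := by
  have hprob : ∀ lam, 0 < lam →
      (∫ x, (gammaMeasure (n + 1 : ℕ) (lam / B)).real (Iio (u * (x + 1))) / (lam / B) ^ (n + 1)
        ∂P.map X) / B ^ (n + 1)
      = lam ^ (-((n + 1 : ℕ) : ℤ)) * P.real {ω | W lam ω < u * (X ω + 1)} := by
    intro lam hlam
    change _ = _ * P.real {ω | (X ω, W lam ω) ∈ {p : ℝ × ℝ | p.2 < u * (p.1 + 1)}}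
    rw [(hindep lam hlam).measureReal_mem_eq_integral hX (hW lam hlam)
      (measurableSet_lt (by fun_prop) (by fun_prop)), hW_law lam hlam, integral_div, zpow_neg,
      zpow_natCast, div_pow, div_div, div_mul_cancel₀ _ (by positivity), inv_mul_eq_div]
    rfl
  have hlim := tendsto_integral_measureReal_gammaMeasure_Iio_div_pow n
    (g := fun x => u * (x + 1)) (by fun_prop) (hX_nonneg.mono fun x hx => by positivity)
    (by simpa only [mul_pow] using hX_int.const_mul (u ^ (n + 1)))
  have hvalue : u ^ (n + 1) / (B ^ (n + 1) * (n + 1)!) * ∫ x, (x + 1) ^ (n + 1) ∂P.map X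
      = (∫ x, (u * (x + 1)) ^ (n + 1) ∂P.map X) / (n + 1)! / B ^ (n + 1) := by
    simp_rw [mul_pow, integral_const_mul]
    field_simp
  rw [hvalue]
  exact ((hlim.comp (tendsto_div_const_nhdsGT_zero hB)).div_const _).congr'
    (eventually_nhdsWithin_of_forall hprob)

theorem gammaPDFReal_mul_add_one_pow (i N : ℕ) (μ : ℝ) {x : ℝ} (hx : 0 ≤ x) :
    gammaPDFReal (i + 1 : ℕ) μ x * (x + 1) ^ N
      = ∑ g ∈ Finset.range (i + 1), μ ^ (i + 1) / i ! * (i.choose g * (-1) ^ (i - g))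
          * ((x + 1) ^ (g + N) * exp (-(μ * x))) := by
  have hx_pow :
      x ^ i = ∑ g ∈ Finset.range (i + 1), (x + 1) ^ g * (-1) ^ (i - g) * i.choose g := by
    rw [← add_pow, add_neg_cancel_right]
  rw [gammaPDFReal_natCast_add_one i μ hx, hx_pow]
  simp only [Finset.sum_mul, Finset.mul_sum]
  refine Finset.sum_congr rfl fun g _ => ?_
  ring

theorem integrable_add_one_pow_gammaMeasure (i N : ℕ) {μ : ℝ} (hμ : 0 < μ) :
    Integrable (fun x => (x + 1) ^ N) (gammaMeasure (i + 1 : ℕ) μ) := by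
  rw [integrable_gammaMeasure_iff (by positivity) hμ, integrableOn_congr_fun
    (fun x (hx : x ∈ Ioi 0) => gammaPDFReal_mul_add_one_pow i N μ hx.le) measurableSet_Ioi]
  exact integrable_finsetSum _ fun g _ =>
    (integrableOn_add_one_pow_mul_exp_neg_mul (g + N) hμ).const_mul _

theorem integral_add_one_pow_gammaMeasure (i N : ℕ) {μ : ℝ} (hμ : 0 < μ) :
    ∫ x, (x + 1) ^ N ∂gammaMeasure (i + 1 : ℕ) μ
      = μ ^ (i + 1) * exp μ / i ! * ∑ g ∈ Finset.range (i + 1), (i.choose g : ℝ)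
          * (-1) ^ (i - g) * μ ^ (-(g + N + 1 : ℤ)) * upperGamma (g + N + 1) μ := by
  rw [integral_gammaMeasure (by positivity) hμ, setIntegral_congr_fun measurableSet_Ioi
      fun x hx => gammaPDFReal_mul_add_one_pow i N μ (le_of_lt hx),
    integral_finsetSum _ fun g _ =>
      (integrableOn_add_one_pow_mul_exp_neg_mul (g + N) hμ).const_mul _,
    Finset.mul_sum]
  refine Finset.sum_congr rfl fun g _ => ?_
  rw [integral_const_mul, integral_add_one_pow_mul_exp_neg_mul (g + N) hμ]
  push_cast
  ring

end ProbabilityTheory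

/-- High-SNR asymptotic of the first-hop outage term (Eq. (11)):
if `X ~ Gamma(I, μ)` and, for each `λ > 0`, `W^{(λ)} ~ Gamma(N, λ/B)` is independent
of `X`, then `lim_{λ → 0+} λ^{-N} P(W^{(λ)} < u (X+1)) = (u^N/(B^N N!)) E[(X+1)^N]`,
and this limit equals
`(u^N/(B^N N!)) (μ^I e^μ/(I-1)!) Σ_{g=0}^{I-1} C(I-1,g) (-1)^{I-1-g} μ^{-(g+N+1)} Γ(g+N+1, μ)`. -/
theorem high_snr_first_hop_outage
    {Ω : Type*} [MeasurableSpace Ω] (P : Measure Ω) [IsProbabilityMeasure P]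
    (N : ℕ) (hN : 1 ≤ N) (I : ℕ) (hI : 1 ≤ I) (B μ u : ℝ) (hB : 0 < B) (hμ : 0 < μ) (hu : 0 < u)
    (X : Ω → ℝ) (hXmeas : Measurable X)
    (hXdist : Measure.map X P = gammaMeasure I μ)
    (W : ℝ → Ω → ℝ)
    (hWmeas : ∀ lam, 0 < lam → Measurable (W lam))
    (hWdist : ∀ lam, 0 < lam → Measure.map (W lam) P = gammaMeasure N (lam / B))
    (hindep : ∀ lam, 0 < lam → IndepFun (W lam) X P) :
    Filter.Tendsto
      (fun lam : ℝ => lam ^ (-(N : ℤ)) * (P {ω | W lam ω < u * (X ω + 1)}).toReal)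
      (nhdsWithin 0 (Set.Ioi 0))
      (nhds (u ^ N / (B ^ N * (Nat.factorial N : ℝ)) * ∫ ω, (X ω + 1) ^ N ∂P)) ∧
    u ^ N / (B ^ N * (Nat.factorial N : ℝ)) * ∫ ω, (X ω + 1) ^ N ∂P =
      u ^ N / (B ^ N * (Nat.factorial N : ℝ)) *
        (μ ^ I * Real.exp μ / (Nat.factorial (I - 1) : ℝ)) *
          ∑ g ∈ Finset.range I, ((I - 1).choose g : ℝ) * (-1 : ℝ) ^ (I - 1 - g) *
            μ ^ (-(g + N + 1 : ℤ)) * upperGamma (g + N + 1) μ := by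
  obtain ⟨n, rfl⟩ := Nat.exists_eq_add_of_le' hN
  obtain ⟨i, rfl⟩ := Nat.exists_eq_add_of_le' hI
  have hmoment : ∫ ω, (X ω + 1) ^ (n + 1) ∂P = ∫ x, (x + 1) ^ (n + 1) ∂P.map X := by
    rw [integral_map hXmeas.aemeasurable (by fun_prop)]
  rw [hmoment]
  refine ⟨?_, ?_⟩
  · refine tendsto_zpow_mul_measureReal_lt_mul_add_one n hB hu hXmeas ?_ ?_ hWmeas hWdist
      fun lam hlam => (hindep lam hlam).symm
    · exact hXdist ▸ ae_nonneg_gammaMeasure _ _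
    · exact hXdist ▸ integrable_add_one_pow_gammaMeasure i (n + 1) hμ
  · rw [hXdist, integral_add_one_pow_gammaMeasure i (n + 1) hμ, Nat.add_sub_cancel]
    ring
end
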